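/- arXiv:1207.6299 — 2 statements merged into one kernel-verified Lean document; each statement's English description precedes it below -/
import Mathlib

section
/- Let r be a positive even integer and c1, c2 rational numbers. If the polynomial identity 1 + (2 − c1)·t + (c2 − c1 + 1)·t² ≡ (1 + t)^{r+2} · (1 + c1·t + c2·t²) holds modulo t⁴ in ℚ[t], then c1 = −r/2 and c2 = r(r+1)/12. -/
/-! Comparing the coefficients of `t` gives `2 - c₁ = (r + 2) + c₁`, i.e. `c₁ = -r/2`. The
coefficient of `t²` then agrees automatically, and the coefficient of `t³` reads
`0 = C(r+2, 3) + c₁ C(r+2, 2) + (r + 2) c₂`, which determines `c₂` since `r + 2 ≠ 0`. -/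

open Polynomial

theorem Polynomial.coeff_eq_of_modByMonic_X_pow_eq {R : Type*} [CommRing R] {p q : R[X]}
    {n k : ℕ} (h : p %ₘ X ^ n = q %ₘ X ^ n) (hk : k < n) : p.coeff k = q.coeff k := by
  have hdvd : X ^ n ∣ p - q := by
    rw [← modByMonic_eq_zero_iff_dvd (monic_X_pow n), sub_modByMonic, h, sub_self]
  simpa [sub_eq_zero] using X_pow_dvd_iff.1 hdvd k hk

theorem Nat.cast_choose_three (K : Type*) [Field K] [CharZero K] (n : ℕ) :
    (n.choose 3 : K) = n * (n - 1) * (n - 2) / 6 := by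
  cases n with
  | zero => simp
  | succ n =>
    have h := Nat.add_one_mul_choose_eq n 2
    rw [← Nat.cast_inj (R := K)] at h
    push_cast [Nat.cast_choose_two] at h ⊢
    linear_combination (-1 / 3 : K) * h

section
variable {R : Type*} [CommSemiring R] (p : R[X]) (a b : R)

theorem Polynomial.mul_one_add_C_mul_X_add_C_mul_X_sq :
    p * (1 + C a * X + C b * X ^ 2) = p + C a * (p * X) + C b * (p * X ^ 2) := by
  ring

theorem Polynomial.coeff_mul_one_add_C_mul_X_add_C_mul_X_sq_one :
    (p * (1 + C a * X + C b * X ^ 2)).coeff 1 = p.coeff 1 + a * p.coeff 0 := by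
  simp [mul_one_add_C_mul_X_add_C_mul_X_sq, coeff_mul_X_pow']

theorem Polynomial.coeff_mul_one_add_C_mul_X_add_C_mul_X_sq_add_two (k : ℕ) :
    (p * (1 + C a * X + C b * X ^ 2)).coeff (k + 2) =
      p.coeff (k + 2) + a * p.coeff (k + 1) + b * p.coeff k := by
  simp only [mul_one_add_C_mul_X_add_C_mul_X_sq, coeff_add, coeff_C_mul, coeff_mul_X,
    coeff_mul_X_pow]

end

theorem chern_class_relation_corank_two_general
    (r : ℕ) (c1 c2 : ℚ)
    (h : (1 + C (2 - c1) * X + C (c2 - c1 + 1) * X ^ 2) %ₘ (X ^ 4 : ℚ[X])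
        = ((1 + X) ^ (r + 2) * (1 + C c1 * X + C c2 * X ^ 2)) %ₘ (X ^ 4 : ℚ[X])) :
    c1 = -(r : ℚ) / 2 ∧ c2 = (r : ℚ) * ((r : ℚ) + 1) / 12 := by
  have coeff_one_eq : 2 - c1 = (r + 2 : ℕ) + c1 := by
    simpa [coeff_mul_one_add_C_mul_X_add_C_mul_X_sq_one, coeff_one_add_X_pow, coeff_X,
      coeff_mul_X_pow', coeff_one] using coeff_eq_of_modByMonic_X_pow_eq h (k := 1) (by norm_num)
  have coeff_three_eq : 0 = ((r + 2).choose 3 : ℚ) + c1 * (r + 2).choose 2 + c2 * (r + 2 : ℕ) := by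
    simpa [coeff_mul_one_add_C_mul_X_add_C_mul_X_sq_add_two, coeff_one_add_X_pow, coeff_X,
      coeff_mul_X_pow', coeff_one] using
      coeff_eq_of_modByMonic_X_pow_eq h (k := 1 + 2) (by norm_num)
  have hc1 : c1 = -(r : ℚ) / 2 := by
    push_cast at coeff_one_eq
    linarith
  refine ⟨hc1, mul_left_cancel₀ (by positivity : (r : ℚ) + 2 ≠ 0) ?_⟩
  rw [Nat.cast_choose_two, Nat.cast_choose_three, hc1] at coeff_three_eq
  push_cast at coeff_three_eq
  linear_combination -coeff_three_eq

/-- The Chern class relation `c_t(K*(1)) = (1+t)^{r+2} · c_t(K)` truncated modulo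
`t⁴` forces `c1 = -r/2` and `c2 = r(r+1)/12`. -/
theorem chern_class_relation_corank_two
    (r : ℕ) (hr : 0 < r) (hre : Even r) (c1 c2 : ℚ)
    (h : (1 + C (2 - c1) * X + C (c2 - c1 + 1) * X ^ 2) %ₘ (X ^ 4 : ℚ[X])
        = ((1 + X) ^ (r + 2) * (1 + C c1 * X + C c2 * X ^ 2)) %ₘ (X ^ 4 : ℚ[X])) :
    c1 = -(r : ℚ) / 2 ∧ c2 = (r : ℚ) * ((r : ℚ) + 1) / 12 :=
  chern_class_relation_corank_two_general r c1 c2 h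
end

section
/- Let W(x0,x1,x2,x3) be the 10×10 skew-symmetric matrix of linear forms with rows: (0,0,0,0,0,0,0,x0,x1,0), (0,0,0,0,0,0,x0,x1,0,x2), (0,0,0,0,0,−x0,x1,0,x2,x3), (0,0,0,0,x0,x1,0,x2,x3,0), (0,0,0,−x0,0,0,x2,−x3,0,0), (0,0,x0,−x1,0,0,x3,0,0,0), (0,−x0,−x1,0,−x2,−x3,0,0,0,0), (−x0,−x1,0,−x2,x3,0,0,0,0,0), (−x1,0,−x2,−x3,0,0,0,0,0,0), (0,−x2,−x3,0,0,0,0,0,0,0). Then det W = 0 identically as a polynomial in ℂ[x0,x1,x2,x3] (equivalently, rank W(p) ≤ 8 for every p ∈ ℂ⁴). -/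
/-!
`W(x)` has an explicit kernel vector whose entries are cubic forms in `x`, with last entry
`x0 ^ 3`; so `det W(x) = 0` whenever `x0 ≠ 0`. The determinant is a continuous
function of `x0`, and `{x0 ≠ 0}` is dense in `ℂ`, so it vanishes identically.
-/

/-- Westwick's 10×10 skew-symmetric matrix of linear forms. -/
def westwickMatrix (x0 x1 x2 x3 : ℂ) : Matrix (Fin 10) (Fin 10) ℂ :=
  Matrix.of
    ![![0, 0, 0, 0, 0, 0, 0, x0, x1, 0],
      ![0, 0, 0, 0, 0, 0, x0, x1, 0, x2],
      ![0, 0, 0, 0, 0, -x0, x1, 0, x2, x3],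
      ![0, 0, 0, 0, x0, x1, 0, x2, x3, 0],
      ![0, 0, 0, -x0, 0, 0, x2, -x3, 0, 0],
      ![0, 0, x0, -x1, 0, 0, x3, 0, 0, 0],
      ![0, -x0, -x1, 0, -x2, -x3, 0, 0, 0, 0],
      ![-x0, -x1, 0, -x2, x3, 0, 0, 0, 0, 0],
      ![-x1, 0, -x2, -x3, 0, 0, 0, 0, 0, 0],
      ![0, -x2, -x3, 0, 0, 0, 0, 0, 0, 0]]

open Matrix

def westwickKernelVector (x0 x1 x2 x3 : ℂ) : Fin 10 → ℂ :=
  ![x2 ^ 3, x1 * x2 * x3 - x0 * x3 ^ 2, x0 * x2 * x3 - x1 * x2 ^ 2, -(x0 * x2 ^ 2),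
    x1 ^ 2 * x2 - x0 * x1 * x3, x0 ^ 2 * x3 - x0 * x1 * x2, -(x0 ^ 2 * x2), 0, 0, x0 ^ 3]

theorem westwickMatrix_mulVec_westwickKernelVector (x0 x1 x2 x3 : ℂ) :
    westwickMatrix x0 x1 x2 x3 *ᵥ westwickKernelVector x0 x1 x2 x3 = 0 := by
  simp only [westwickMatrix, westwickKernelVector, cons_mulVec, cons_dotProduct,
    dotProduct_of_isEmpty, head_cons, tail_cons, cons_eq_zero_iff]
  refine ⟨?_, ?_, ?_, ?_, ?_, ?_, ?_, ?_, ?_, ?_, Subsingleton.elim _ _⟩ <;> ring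

theorem westwickKernelVector_ne_zero {x0 : ℂ} (hx0 : x0 ≠ 0) (x1 x2 x3 : ℂ) :
    westwickKernelVector x0 x1 x2 x3 ≠ 0 := fun h ↦
  pow_ne_zero 3 hx0 (congrFun h 9)

theorem det_westwickMatrix_of_ne_zero {x0 : ℂ} (hx0 : x0 ≠ 0) (x1 x2 x3 : ℂ) :
    (westwickMatrix x0 x1 x2 x3).det = 0 :=
  exists_mulVec_eq_zero_iff.mp
    ⟨_, westwickKernelVector_ne_zero hx0 x1 x2 x3, westwickMatrix_mulVec_westwickKernelVector ..⟩

theorem continuous_westwickMatrix (x1 x2 x3 : ℂ) :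
    Continuous fun t : ℂ ↦ westwickMatrix t x1 x2 x3 := by
  unfold westwickMatrix
  fun_prop

/-- The determinant of Westwick's matrix vanishes identically. -/
theorem westwick_det_zero (x0 x1 x2 x3 : ℂ) :
    (westwickMatrix x0 x1 x2 x3).det = 0 := by
  have hdet : (fun t ↦ (westwickMatrix t x1 x2 x3).det) = fun _ ↦ 0 :=
    Continuous.ext_on (dense_compl_singleton 0) (continuous_westwickMatrix x1 x2 x3).matrix_det
      continuous_const fun t ht ↦ det_westwickMatrix_of_ne_zero ht x1 x2 x3
  exact congrFun hdet x0
end
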